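/- arXiv:1808.09836 — 2 statements merged into one kernel-verified Lean document; each statement's English description precedes it below -/
import Mathlib

section
/- Let G be a bipartite graph with bipartition classes A, B such that A is countably infinite and A is ℵ₀-star-linked (every finite subset of A has infinite common neighbourhood in B). Fix a ∈ A and any x ∈ A \ {a}. Then there is a generalised path R of order type ω in G whose first vertex is a, whose vertex set contains A, such that R is {x}-robust, and moreover R − x admits a path order of order type ω with first vertex a. -/
/-!
Enumerate `A` as `α 0 = a, α 1, …` and choose distinct vertices `b 0, b 1, …` of `B` such that
`b i` is a common neighbour of `α 0, …, α (i + 2)`. Then `α 0 b 0 α 1 b 1 …` is a ray covering `A`.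
Because each `b i` also sees the vertex two steps ahead, deleting `x = α k` and moving every later
`α j` one place back still leaves a ray starting at `a`.
-/

open Cardinal

universe u

/-- A generalised path structure on the whole vertex set of `G`: a well-order `r`
such that every vertex's down-neighbours are cofinal below it. -/
def IsGenPath {V : Type*} (G : SimpleGraph V) (r : V → V → Prop) : Prop :=
  IsWellOrder V r ∧ ∀ v v' : V, r v' v → ∃ w : V, G.Adj v w ∧ r w v ∧ ¬ r w v'

/-- A generalised path in `G` with vertex set `S` and path order `r`. -/
def IsGenPathRel {V : Type*} (G : SimpleGraph V) (S : Set V) (r : S → S → Prop) : Prop :=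
  IsWellOrder S r ∧
    ∀ v v' : S, r v' v → ∃ w : S, G.Adj (v : V) (w : V) ∧ r w v ∧ ¬ r w v'

open Classical in
noncomputable def relType {α : Type u} (r : α → α → Prop) : Ordinal.{u} :=
  if h : IsWellOrder α r then @Ordinal.type α r h else 0

/-- `v` is a limit element of the order `r` : neither minimal nor a successor. -/
def IsLimitElem {α : Type*} (r : α → α → Prop) (v : α) : Prop :=
  (∃ w, r w v) ∧ ∀ w, r w v → ∃ u, r w u ∧ r u v

/-- The set of limit elements of a path order on `S`, as a subset of the ambient vertex set. -/
def LimitSet {V : Type*} (S : Set V) (r : S → S → Prop) : Set V :=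
  {v | ∃ h : v ∈ S, IsLimitElem r ⟨v, h⟩}

/-- `A` is `κ`-star-linked in `B`: every finite subset of `A` has common
neighbourhood of cardinality `κ` inside `B`. -/
def StarLinked {V : Type*} (G : SimpleGraph V) (κ : Cardinal) (A B : Set V) : Prop :=
  ∀ F : Finset V, ↑F ⊆ A → #{b : V | b ∈ B ∧ ∀ v ∈ F, G.Adj v b} = κ

/-- The spanning subgraph of `G` consisting of the edges of colour `i`. -/
def colourSub {V : Type*} (G : SimpleGraph V) {n : ℕ} (c : V → V → Fin n) (i : Fin n) :
    SimpleGraph V where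
  Adj u v := G.Adj u v ∧ c u v = i ∧ c v u = i
  symm := by constructor; rintro u v ⟨h, h1, h2⟩; exact ⟨h.symm, h2, h1⟩
  loopless := by constructor; rintro v ⟨h, -⟩; exact G.loopless.irrefl v h

/-- `A` is `κ`-star-linked in `B` in colour `i`. -/
def StarLinkedC {V : Type*} (G : SimpleGraph V) {n : ℕ} (c : V → V → Fin n) (i : Fin n)
    (κ : Cardinal) (A B : Set V) : Prop :=
  StarLinked (colourSub G c i) κ A B

/-- `G` is a graph of type `H_{κ,κ}` with main class `A` and second class `B`. -/
def IsTypeH {V : Type u} (κ : Cardinal.{u}) (G : SimpleGraph V) (A B : Set V) : Prop :=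
  A ∪ B = Set.univ ∧
    ∃ (ι : Type u) (_ : LinearOrder ι) (a b : ι → V),
      relType ((· < ·) : ι → ι → Prop) = κ.ord ∧
      A = Set.range a ∧ B = Set.range b ∧
      ∀ ξ ζ : ι, ξ ≤ ζ → a ξ ≠ b ζ → G.Adj (a ξ) (b ζ)

/-- `U` is `<κ`-inseparable in `H`: no two of its vertices can be separated by
deleting fewer than `κ` vertices. -/
def Insep {V : Type*} (κ : Cardinal) (H : SimpleGraph V) (U : Set V) : Prop :=
  ∀ u ∈ U, ∀ v ∈ U, u ≠ v → ∀ W : Set V, #W < κ →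
    ∀ (hu : u ∉ W) (hv : v ∉ W), (H.induce Wᶜ).Reachable ⟨u, hu⟩ ⟨v, hv⟩

/-- The bipartite subgraph of `G` consisting of the edges between `S` and `T`. -/
def between {V : Type*} (G : SimpleGraph V) (S T : Set V) : SimpleGraph V where
  Adj u v := G.Adj u v ∧ ((u ∈ S ∧ v ∈ T) ∨ (u ∈ T ∧ v ∈ S))
  symm := by constructor; rintro u v ⟨h, h'⟩; exact ⟨h.symm, h'.symm.imp And.symm And.symm⟩
  loopless := by constructor; rintro v ⟨h, -⟩; exact G.loopless.irrefl v h

section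

open Function

variable {V : Type*}

theorem Set.Countable.exists_injective_nat_range_eq {A : Set V} (hc : A.Countable)
    (hi : A.Infinite) {a : V} (ha : a ∈ A) :
    ∃ α : ℕ → V, Injective α ∧ Set.range α = A ∧ α 0 = a := by
  have := hc.to_subtype
  have := hi.to_subtype
  obtain ⟨e⟩ : Nonempty (ℕ ≃ A) := nonempty_equiv_of_countable
  let e' := (Equiv.swap 0 (e.symm ⟨a, ha⟩)).trans e
  refine ⟨(↑) ∘ e', Subtype.val_injective.comp e'.injective, ?_, by simp [e']⟩
  rw [Set.range_comp, e'.range_eq_univ, Set.image_univ, Subtype.range_coe]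

theorem exists_injective_forall_mem_of_antitone {S : ℕ → Set V} (hS : Antitone S)
    (hinf : ∀ n, (S n).Infinite) : ∃ b : ℕ → V, Injective b ∧ ∀ n, b n ∈ S n := by
  classical
  -- Choose pairs `(i, v)` with `v ∈ S i`, strictly increasing `i` and pairwise distinct `v`;
  -- since `i ≥ n` at step `n`, antitonicity gives `v ∈ S n`.
  obtain ⟨f, hfS, hf⟩ := exists_seq_of_forall_finset_exists (fun p : ℕ × V => p.2 ∈ S p.1)
    (fun p q => p.1 < q.1 ∧ p.2 ≠ q.2) fun s _ => by
      obtain ⟨v, hv, hvs⟩ :=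
        (hinf (s.sup Prod.fst + 1)).exists_notMem_finset (s.image Prod.snd)
      refine ⟨(s.sup Prod.fst + 1, v), hv, fun p hp => ⟨Nat.lt_succ_of_le (Finset.le_sup hp), ?_⟩⟩
      rintro rfl
      exact hvs (Finset.mem_image_of_mem _ hp)
  have hmono : StrictMono fun n => (f n).1 := fun m n h => (hf m n h).1
  exact ⟨fun n => (f n).2, Injective.of_lt_imp_ne fun m n h => (hf m n h).2,
    fun n => hS (hmono.id_le n) (hfS n)⟩

def skip (k m : ℕ) : ℕ := if m < k then m else m + 1

theorem skip_injective (k : ℕ) : Injective (skip k) := by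
  intro m n h
  unfold skip at h
  split_ifs at h <;> omega

theorem range_skip (k : ℕ) : Set.range (skip k) = {k}ᶜ := by
  ext j
  simp only [Set.mem_range, Set.mem_compl_iff, Set.mem_singleton_iff, skip]
  constructor
  · rintro ⟨m, rfl⟩
    split_ifs <;> omega
  · intro hj
    rcases lt_or_gt_of_ne hj with h | h
    · exact ⟨j, if_pos h⟩
    · exact ⟨j - 1, by split_ifs <;> omega⟩

theorem skip_le_succ (k m : ℕ) : skip k m ≤ m + 1 := by
  unfold skip
  split_ifs <;> omega

theorem skip_zero {k : ℕ} (hk : k ≠ 0) : skip k 0 = 0 := if_pos (Nat.pos_of_ne_zero hk)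

def interleave (α β : ℕ → V) : ℕ → V := Sum.elim α β ∘ Equiv.natSumNatEquivNat.symm

section interleave

variable (α β : ℕ → V)

@[simp]
theorem interleave_two_mul (n : ℕ) : interleave α β (2 * n) = α n := by
  simp [interleave]

@[simp]
theorem interleave_two_mul_add_one (n : ℕ) : interleave α β (2 * n + 1) = β n := by
  simp [interleave]

@[simp]
theorem interleave_zero : interleave α β 0 = α 0 :=
  interleave_two_mul α β 0

theorem range_interleave : Set.range (interleave α β) = Set.range α ∪ Set.range β := by
  rw [interleave, Set.range_comp, Equiv.range_eq_univ, Set.image_univ, Set.Sum.elim_range]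

variable {α β}

theorem interleave_injective (hα : Injective α) (hβ : Injective β) (h : ∀ m n, α m ≠ β n) :
    Injective (interleave α β) :=
  (hα.sumElim hβ h).comp Equiv.natSumNatEquivNat.symm.injective

theorem interleave_adj {G : SimpleGraph V} (h₁ : ∀ n, G.Adj (α n) (β n))
    (h₂ : ∀ n, G.Adj (β n) (α (n + 1))) (n : ℕ) :
    G.Adj (interleave α β n) (interleave α β (n + 1)) := by
  obtain ⟨m, rfl | rfl⟩ := Nat.even_or_odd' n
  · simpa using h₁ m
  · rw [show 2 * m + 1 + 1 = 2 * (m + 1) by ring]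
    simpa using h₂ m

theorem interleave_comp_adj {G : SimpleGraph V} (hadj : ∀ i j, j ≤ i + 2 → G.Adj (α j) (β i))
    {σ : ℕ → ℕ} (hσ : ∀ n, σ n ≤ n + 1) (n : ℕ) :
    G.Adj (interleave (α ∘ σ) β n) (interleave (α ∘ σ) β (n + 1)) :=
  interleave_adj (fun m => hadj m _ (by have := hσ m; omega))
    (fun m => (hadj m _ (by have := hσ (m + 1); omega)).symm) n

end interleave

theorem infinite_setOf_forall_adj {G : SimpleGraph V} {A : Set V}
    (hstar : ∀ F : Finset V, ↑F ⊆ A → {b : V | ∀ v ∈ F, G.Adj v b}.Infinite)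
    {α : ℕ → V} (hα : ∀ n, α n ∈ A) (n : ℕ) : {v | ∀ j ≤ n, G.Adj (α j) v}.Infinite := by
  classical
  refine (hstar ((Finset.range (n + 1)).image α) ?_).mono fun v hv j hj => ?_
  · simpa [Set.subset_def] using fun j _ => hα j
  · exact hv _ (Finset.mem_image_of_mem α (Finset.mem_range.2 (by omega)))

theorem notMem_of_adj_of_mem {G : SimpleGraph V} {A B : Set V} (hdisj : Disjoint A B)
    (hbip : ∀ u v, G.Adj u v → (u ∈ A ∧ v ∈ B) ∨ (u ∈ B ∧ v ∈ A)) {u v : V} (hu : u ∈ A)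
    (h : G.Adj u v) : v ∉ A := by
  rcases hbip u v h with ⟨-, hv⟩ | ⟨hu', -⟩
  · exact Set.disjoint_right.mp hdisj hv
  · exact absurd hu' (Set.disjoint_left.mp hdisj hu)

end

theorem stmt7_general {V : Type*} (G : SimpleGraph V) (A B : Set V)
    (hdisj : Disjoint A B)
    (hbip : ∀ u v, G.Adj u v → (u ∈ A ∧ v ∈ B) ∨ (u ∈ B ∧ v ∈ A))
    (hAcble : A.Countable) (hAinf : A.Infinite)
    (hstar : ∀ F : Finset V, ↑F ⊆ A → {b : V | ∀ v ∈ F, G.Adj v b}.Infinite)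
    (a : V) (ha : a ∈ A) (x : V) (hxA : x ∈ A) (hxa : x ≠ a) :
    ∃ f : ℕ → V, Function.Injective f ∧ f 0 = a ∧ A ⊆ Set.range f ∧
      (∀ n, G.Adj (f n) (f (n + 1))) ∧
      ∃ g : ℕ → V, Function.Injective g ∧ g 0 = a ∧
        Set.range g = Set.range f \ {x} ∧ ∀ n, G.Adj (g n) (g (n + 1)) := by
  obtain ⟨α, hαinj, rfl, rfl⟩ := hAcble.exists_injective_nat_range_eq hAinf ha
  obtain ⟨k, rfl⟩ := hxA
  have hk : k ≠ 0 := fun h => hxa (congrArg α h)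
  obtain ⟨b, hbinj, hb⟩ := exists_injective_forall_mem_of_antitone
    (S := fun i => {v | ∀ j ≤ i + 2, G.Adj (α j) v}) (fun i i' h v hv j hj => hv j (by omega))
    (fun i => infinite_setOf_forall_adj hstar Set.mem_range_self (i + 2))
  have hb_notMem : ∀ i, b i ∉ Set.range α :=
    fun i => notMem_of_adj_of_mem hdisj hbip ⟨0, rfl⟩ (hb i 0 (Nat.zero_le _))
  have hne : ∀ m n, α m ≠ b n := fun m n h => hb_notMem n ⟨m, h⟩
  refine ⟨interleave α b, interleave_injective hαinj hbinj hne, by simp, ?_,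
    interleave_comp_adj (σ := id) hb fun n => n.le_succ, interleave (α ∘ skip k) b,
    interleave_injective (hαinj.comp (skip_injective k)) hbinj fun m => hne _,
    by simp [skip_zero hk], ?_, interleave_comp_adj hb (skip_le_succ k)⟩
  · rw [range_interleave]
    exact Set.subset_union_left
  · have hxb : α k ∉ Set.range b := fun ⟨n, hn⟩ => hb_notMem n ⟨k, hn.symm⟩
    rw [range_interleave, range_interleave, Set.range_comp, range_skip,
      Set.image_compl_eq_range_sdiff_image hαinj, Set.image_singleton, Set.union_sdiff_distrib,
      Set.sdiff_singleton_eq_self hxb]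

/-- in a bipartite graph with countably infinite `ℵ₀`-star-linked
class `A`, for `a ∈ A` and `x ∈ A \ {a}` there is an `{x}`-robust ray starting
at `a` and covering `A`, such that the ray on the remaining vertices after
deleting `x` can also start at `a`. -/
theorem stmt7 {V : Type*} (G : SimpleGraph V) (A B : Set V)
    (hdisj : Disjoint A B) (hcov : A ∪ B = Set.univ)
    (hbip : ∀ u v, G.Adj u v → (u ∈ A ∧ v ∈ B) ∨ (u ∈ B ∧ v ∈ A))
    (hAcble : A.Countable) (hAinf : A.Infinite)
    (hstar : ∀ F : Finset V, ↑F ⊆ A → {b : V | ∀ v ∈ F, G.Adj v b}.Infinite)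
    (a : V) (ha : a ∈ A) (x : V) (hxA : x ∈ A) (hxa : x ≠ a) :
    ∃ f : ℕ → V, Function.Injective f ∧ f 0 = a ∧ A ⊆ Set.range f ∧
      (∀ n, G.Adj (f n) (f (n + 1))) ∧
      ∃ g : ℕ → V, Function.Injective g ∧ g 0 = a ∧
        Set.range g = Set.range f \ {x} ∧ ∀ n, G.Adj (g n) (g (n + 1)) :=
  stmt7_general G A B hdisj hbip hAcble hAinf hstar a ha x hxA hxa
end

section
/- Let κ be an infinite cardinal, G a graph with A, B ⊆ V(G), |A| = κ, and suppose A is κ-star-linked in B. Then there is a partition {B', B''} of B into two sets such that A is κ-star-linked in B'' and the bipartite graph G[A, B'] contains a perfect matching of A into B' (an injection m: A → B' with a adjacent to m(a) for all a ∈ A). -/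
/-!
Well-order the `κ` tasks "a neighbour of `a`" (for `a ∈ A`) and "a common neighbour of `F`"
(one for each pair `(F, a)` with `F ⊆ A` finite and `a ∈ A`), and serve them greedily with
distinct vertices of `B`: when a task comes up fewer than `κ` vertices are taken, while it has
`κ` candidates. The first kind of task yields the matching into `B'`; the second leaves `κ`
common neighbours of every `F` in `B'' = B \ B'`.
-/

open Cardinal

universe u

open Function Set

theorem exists_injective_mem_of_mk_Iio_lt {α V : Type u} [LinearOrder α] [WellFoundedLT α]
    (S : α → Set V) (hS : ∀ x, #(Iio x) < #(S x)) :
    ∃ f : α → V, Injective f ∧ ∀ x, f x ∈ S x := by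
  have fresh : ∀ x (prev : ∀ y < x, V), ∃ v ∈ S x, ∀ y (hy : y < x), prev y hy ≠ v := by
    intro x prev
    by_contra! h
    have hsub : S x ⊆ range fun y : Iio x => prev y y.2 := fun v hv =>
      let ⟨y, hy, e⟩ := h v hv; ⟨⟨y, hy⟩, e⟩
    exact (hS x).not_ge ((mk_le_mk_of_subset hsub).trans mk_range_le)
  let f : α → V := WellFoundedLT.fix fun x prev => (fresh x prev).choose
  have hf : ∀ x, f x ∈ S x ∧ ∀ y < x, f y ≠ f x := fun x => by
    rw [show f x = _ from WellFoundedLT.fix_eq _ x]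
    exact (fresh x _).choose_spec
  refine ⟨f, fun x y hxy => ?_, fun x => (hf x).1⟩
  by_contra hne
  rcases lt_or_gt_of_ne hne with h | h
  · exact (hf y).2 x h hxy
  · exact (hf x).2 y h hxy.symm

theorem exists_injective_mem_of_mk_le {ι V : Type u} {κ : Cardinal.{u}} (S : ι → Set V)
    (hι : #ι ≤ κ) (hS : ∀ i, κ ≤ #(S i)) : ∃ f : ι → V, Injective f ∧ ∀ i, f i ∈ S i := by
  obtain ⟨e⟩ : Nonempty ((#ι).ord.ToType ≃ ι) := Cardinal.eq.mp (by simp)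
  obtain ⟨f, hf, hfS⟩ := exists_injective_mem_of_mk_Iio_lt (S ∘ e) fun x =>
    (mk_Iio_lt x (by simp)).trans_le ((mk_congr e).trans_le (hι.trans (hS (e x))))
  exact ⟨f ∘ e.symm, hf.comp e.symm.injective, fun i => by simpa using hfS (e.symm i)⟩

theorem mk_sum_finset_prod_self (α : Type u) [Infinite α] : #(α ⊕ Finset α × α) = #α := by
  rw [mk_sum, mk_prod, mk_finset_of_infinite, lift_id, lift_id, mul_eq_self (aleph0_le_mk α),
    add_eq_self (aleph0_le_mk α)]

theorem starLinked_iff_forall_finset {V : Type*} {G : SimpleGraph V} {κ : Cardinal}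
    {A B : Set V} :
    StarLinked G κ A B ↔ ∀ F : Finset A, #{b | b ∈ B ∧ ∀ a ∈ F, G.Adj a b} = κ := by
  classical
  refine ⟨fun h F => ?_, fun h F hF => ?_⟩
  · simpa using h (F.map (Embedding.subtype _)) (by simp)
  · convert h (F.subtype (· ∈ A)) using 3
    ext b
    simp only [Finset.mem_subtype, Subtype.forall]
    exact and_congr_right fun _ => ⟨fun h a _ ha => h a ha, fun h a ha => h a (hF ha) ha⟩

/-- if `|A| = κ` and `A` is `κ`-star-linked in `B`, then `B` can be
partitioned into `B'` and `B''` such that `A` is `κ`-star-linked in `B''` and there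
is a perfect matching of `A` into `B'`. -/
theorem stmt13 {V : Type u} (κ : Cardinal.{u}) (hκ : ℵ₀ ≤ κ)
    (G : SimpleGraph V) (A B : Set V) (hA : #A = κ)
    (hAB : StarLinked G κ A B) :
    ∃ B' B'' : Set V, Disjoint B' B'' ∧ B' ∪ B'' = B ∧
      StarLinked G κ A B'' ∧
      ∃ m : A → V, Function.Injective m ∧
        ∀ a : A, m a ∈ B' ∧ G.Adj (a : V) (m a) := by
  rw [starLinked_iff_forall_finset] at hAB
  have : Infinite A := infinite_iff.mpr (hA ▸ hκ)
  let N : Finset A → Set V := fun F => {b | b ∈ B ∧ ∀ a ∈ F, G.Adj a b}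
  obtain ⟨f, hf, hfN⟩ := exists_injective_mem_of_mk_le (κ := κ)
    (Sum.elim (fun a => N {a}) (fun p : Finset A × A => N p.1))
    (by rw [mk_sum_finset_prod_self, hA]) (by rintro (a | ⟨F, a⟩) <;> exact (hAB _).ge)
  let m : A → V := f ∘ Sum.inl
  have hmB : range m ⊆ B := by
    rintro _ ⟨a, rfl⟩
    exact (hfN (.inl a)).1
  have hB'' : StarLinked G κ A (B \ range m) := by
    rw [starLinked_iff_forall_finset]
    intro F
    refine le_antisymm ?_ ?_
    · refine (mk_le_mk_of_subset ?_).trans (hAB F).le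
      exact fun b hb => ⟨hb.1.1, hb.2⟩
    · have hfresh : ∀ a, f (.inr (F, a)) ∈ {b | b ∈ B \ range m ∧ ∀ a ∈ F, G.Adj a b} :=
        fun a => ⟨⟨(hfN (.inr (F, a))).1, by rintro ⟨_, h⟩; exact Sum.inl_ne_inr (hf h)⟩,
          (hfN (.inr (F, a))).2⟩
      exact hA ▸ mk_le_of_injective (f := fun a => ⟨_, hfresh a⟩)
        fun a a' h => (Prod.mk.inj (Sum.inr.inj (hf (congrArg Subtype.val h)))).2
  exact ⟨range m, B \ range m, disjoint_sdiff_right, union_sdiff_cancel hmB, hB'', m,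
    hf.comp Sum.inl_injective,
    fun a => ⟨mem_range_self a, (hfN (.inl a)).2 a (Finset.mem_singleton_self a)⟩⟩
end
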